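/- arXiv:1812.09058 — 5 statements merged into one kernel-verified Lean document; each statement's English description precedes it below -/
import Mathlib

section
/- If F₁, F₂ ⊆ 2^[n] are families of subsets of an n-element set such that every pair F ∈ F₁, G ∈ F₂ is incomparable (neither F ⊆ G nor G ⊆ F), then |F₁| · |F₂| ≤ 2^(2n-4). In particular min(|F₁|, |F₂|) ≤ 2^(n-2). -/
open Finset

lemma stmt5_aux (N d u i f₁ f₂ : ℤ) (hNpos : 0 < N)
    (h1 : N * i ≤ d * u) (h2 : f₁ ≤ i) (h3 : f₂ + d + u ≤ N + i)
    (hd : d ≤ N) (hu : u ≤ N) (hd0 : 0 ≤ d) (hu0 : 0 ≤ u)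
    (hf₁0 : 0 ≤ f₁) (hf₂0 : 0 ≤ f₂) (hi0 : 0 ≤ i) :
    16 * (f₁ * f₂) ≤ N * N := by
  have step1 : N * f₂ ≤ (N - d) * (N - u) := by nlinarith
  have step2 : (N * f₁) * (N * f₂) ≤ (d * u) * ((N - d) * (N - u)) := by
    have hA : N * f₁ ≤ d * u := le_trans (by nlinarith) h1
    exact mul_le_mul hA step1 (by nlinarith) (by nlinarith)
  have step3 : 4 * (d * (N - d)) ≤ N * N := by nlinarith [sq_nonneg (N - 2 * d)]
  have step4 : 4 * (u * (N - u)) ≤ N * N := by nlinarith [sq_nonneg (N - 2 * u)]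
  have hdA : 0 ≤ d * (N - d) := by nlinarith
  have huB : 0 ≤ u * (N - u) := by nlinarith
  have h5 : (16 * (f₁ * f₂)) * (N * N) ≤ (N * N) * (N * N) := by nlinarith
  exact le_of_mul_le_mul_right h5 (by positivity : (0:ℤ) < N * N)

theorem stmt5 (n : ℕ) (hn : 2 ≤ n) (F₁ F₂ : Finset (Finset (Fin n)))
    (hcross : ∀ F ∈ F₁, ∀ G ∈ F₂, ¬F ⊆ G ∧ ¬G ⊆ F) :
    F₁.card * F₂.card ≤ 2 ^ (2 * n - 4) ∧ min F₁.card F₂.card ≤ 2 ^ (n - 2) := by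
  classical
  let D : Finset (Finset (Fin n)) := univ.filter (fun S => ∃ F ∈ F₁, S ⊆ F)
  let U : Finset (Finset (Fin n)) := univ.filter (fun S => ∃ F ∈ F₁, F ⊆ S)
  have hDl : IsLowerSet (D : Set (Finset (Fin n))) := by
    intro s t hts ht
    simp only [D, mem_coe, mem_filter, mem_univ, true_and] at ht ⊢
    obtain ⟨F, hF, hsF⟩ := ht
    exact ⟨F, hF, hts.trans hsF⟩
  have hUu : IsUpperSet (U : Set (Finset (Fin n))) := by
    intro s t hts ht
    simp only [U, mem_coe, mem_filter, mem_univ, true_and] at ht ⊢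
    obtain ⟨F, hF, hsF⟩ := ht
    exact ⟨F, hF, hsF.trans hts⟩
  have hHK : 2 ^ n * #(D ∩ U) ≤ #D * #U := by
    have := hDl.card_inter_le_finset hUu
    simpa using this
  have hF1sub : F₁ ⊆ D ∩ U := by
    intro F hF
    simp only [D, U, mem_inter, mem_filter, mem_univ, true_and]
    exact ⟨⟨F, hF, subset_rfl⟩, ⟨F, hF, subset_rfl⟩⟩
  have hdisj : Disjoint F₂ (D ∪ U) := by
    rw [Finset.disjoint_left]
    intro G hG hGDU
    rcases Finset.mem_union.1 hGDU with h | h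
    · simp only [D, mem_filter, mem_univ, true_and] at h
      obtain ⟨F, hF, hGF⟩ := h
      exact (hcross F hF G hG).2 hGF
    · simp only [U, mem_filter, mem_univ, true_and] at h
      obtain ⟨F, hF, hFG⟩ := h
      exact (hcross F hF G hG).1 hFG
  have hcard : #F₂ + #(D ∪ U) ≤ 2 ^ n := by
    rw [← card_union_of_disjoint hdisj]
    calc #(F₂ ∪ (D ∪ U)) ≤ #(univ : Finset (Finset (Fin n))) := card_le_univ _
    _ = 2 ^ n := by simp [card_univ]
  have hunion : #(D ∪ U) + #(D ∩ U) = #D + #U := card_union_add_card_inter D U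
  have hdle : #D ≤ 2 ^ n := (card_le_univ D).trans_eq (by simp [card_univ])
  have hule : #U ≤ 2 ^ n := (card_le_univ U).trans_eq (by simp [card_univ])
  have hf1le : #F₁ ≤ #(D ∩ U) := card_le_card hF1sub
  have key : 16 * ((#F₁ : ℤ) * (#F₂ : ℤ)) ≤ (2 ^ n : ℤ) * (2 ^ n : ℤ) := by
    apply stmt5_aux (2 ^ n : ℤ) (#D) (#U) (#(D ∩ U)) (#F₁) (#F₂)
    · positivity
    · exact_mod_cast hHK
    · exact_mod_cast hf1le
    · push_cast [← hunion]
      have : ((#F₂ : ℤ)) + #(D ∪ U) ≤ 2 ^ n := by exact_mod_cast hcard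
      linarith
    · exact_mod_cast hdle
    · exact_mod_cast hule
    all_goals positivity
  have keyN : 16 * (#F₁ * #F₂) ≤ 2 ^ n * 2 ^ n := by exact_mod_cast key
  have hprod : #F₁ * #F₂ ≤ 2 ^ (2 * n - 4) := by
    have h16 : 16 * 2 ^ (2 * n - 4) = 2 ^ n * 2 ^ n := by
      rw [← pow_add]
      have h4 : (16 : ℕ) = 2 ^ 4 := by norm_num
      rw [h4, ← pow_add]
      congr 1
      omega
    omega
  refine ⟨hprod, ?_⟩
  by_contra hlt
  push_neg at hlt
  have hm : 2 ^ (n - 2) + 1 ≤ min #F₁ #F₂ := hlt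
  have hmul : (2 ^ (n - 2) + 1) * (2 ^ (n - 2) + 1) ≤ #F₁ * #F₂ :=
    Nat.mul_le_mul (hm.trans (min_le_left _ _)) (hm.trans (min_le_right _ _))
  have hsq : 2 ^ (n - 2) * 2 ^ (n - 2) = 2 ^ (2 * n - 4) := by
    rw [← pow_add]; congr 1; omega
  have hexp : (2 ^ (n - 2) + 1) * (2 ^ (n - 2) + 1)
      = 2 ^ (n - 2) * 2 ^ (n - 2) + 2 * 2 ^ (n - 2) + 1 := by ring
  omega
end

section
/- For n ≥ 3, there exists a 3-coloring of 2^[n] with no rainbow copy of P₃, ∨₂, or ∧₂ in which every color class has size exactly 2^(n-2). Hence f(n,3,{P₃,∨₂,∧₂}) = 2^(n-2). -/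
/-- The three sets `A`, `B`, `C` receive three pairwise distinct colors
under the partial 3-coloring `c`. -/
def RainbowColored (n : ℕ) (c : Finset (Fin n) → Option (Fin 3))
    (A B C : Finset (Fin n)) : Prop :=
  ∃ i j k : Fin 3, c A = some i ∧ c B = some j ∧ c C = some k ∧ i ≠ j ∧ i ≠ k ∧ j ≠ k

/-- The partial 3-coloring `c` admits no rainbow copy of `P₃`, `∨₂` or `∧₂`. -/
def AvoidsRainbow (n : ℕ) (c : Finset (Fin n) → Option (Fin 3)) : Prop :=
  (¬∃ A B C : Finset (Fin n), A ⊂ B ∧ B ⊂ C ∧ RainbowColored n c A B C) ∧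
  (¬∃ A B C : Finset (Fin n), A ⊂ B ∧ A ⊂ C ∧ ¬B ⊆ C ∧ ¬C ⊆ B ∧ RainbowColored n c A B C) ∧
  (¬∃ A B C : Finset (Fin n), B ⊂ A ∧ C ⊂ A ∧ ¬B ⊆ C ∧ ¬C ⊆ B ∧ RainbowColored n c A B C)

namespace Stmt7Aux

open Finset

/-! ### The construction: a coloring depending only on the trace on `{0,1,2}` -/

def col : Bool × Bool × Bool → Option (Fin 3)
  | (true, _, false) => some 0
  | (false, true, _) => some 1
  | (_, false, true) => some 2
  | _ => none

def ble (p q : Bool × Bool × Bool) : Prop :=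
  (p.1 = true → q.1 = true) ∧ (p.2.1 = true → q.2.1 = true) ∧ (p.2.2 = true → q.2.2 = true)

instance (p q : Bool × Bool × Bool) : Decidable (ble p q) := by
  unfold ble; infer_instance

lemma key1 : ∀ pa pb pc : Bool × Bool × Bool, ble pa pb → ble pb pc →
    ∀ i j k : Fin 3, col pa = some i → col pb = some j → col pc = some k →
    i = j ∨ i = k ∨ j = k := by decide

lemma key2 : ∀ pa pb pc : Bool × Bool × Bool, ble pa pb → ble pa pc →
    ∀ i j k : Fin 3, col pa = some i → col pb = some j → col pc = some k →
    i = j ∨ i = k ∨ j = k := by decide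

lemma key3 : ∀ pa pb pc : Bool × Bool × Bool, ble pb pa → ble pc pa →
    ∀ i j k : Fin 3, col pa = some i → col pb = some j → col pc = some k →
    i = j ∨ i = k ∨ j = k := by decide

def myc (n : ℕ) (e0 e1 e2 : Fin n) (F : Finset (Fin n)) : Option (Fin 3) :=
  col (decide (e0 ∈ F), decide (e1 ∈ F), decide (e2 ∈ F))

lemma myc_eq0 {n : ℕ} (e0 e1 e2 : Fin n) (F : Finset (Fin n)) :
    myc n e0 e1 e2 F = some 0 ↔ e0 ∈ F ∧ e2 ∉ F := by
  by_cases h0 : e0 ∈ F <;> by_cases h1 : e1 ∈ F <;> by_cases h2 : e2 ∈ F <;>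
    simp [myc, col, h0, h1, h2]

lemma myc_eq1 {n : ℕ} (e0 e1 e2 : Fin n) (F : Finset (Fin n)) :
    myc n e0 e1 e2 F = some 1 ↔ e1 ∈ F ∧ e0 ∉ F := by
  by_cases h0 : e0 ∈ F <;> by_cases h1 : e1 ∈ F <;> by_cases h2 : e2 ∈ F <;>
    simp [myc, col, h0, h1, h2]

lemma myc_eq2 {n : ℕ} (e0 e1 e2 : Fin n) (F : Finset (Fin n)) :
    myc n e0 e1 e2 F = some 2 ↔ e2 ∈ F ∧ e1 ∉ F := by
  by_cases h0 : e0 ∈ F <;> by_cases h1 : e1 ∈ F <;> by_cases h2 : e2 ∈ F <;>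
    simp [myc, col, h0, h1, h2]

lemma ble_of_subset {n : ℕ} (e0 e1 e2 : Fin n) {A B : Finset (Fin n)} (h : A ⊆ B) :
    ble (decide (e0 ∈ A), decide (e1 ∈ A), decide (e2 ∈ A))
        (decide (e0 ∈ B), decide (e1 ∈ B), decide (e2 ∈ B)) := by
  refine ⟨?_, ?_, ?_⟩ <;> · simp only [decide_eq_true_eq]; exact fun hx => h hx

lemma card_cond {n : ℕ} (x y : Fin n) (hxy : x ≠ y) :
    (univ.filter fun F : Finset (Fin n) => x ∈ F ∧ y ∉ F).card = 2 ^ (n - 2) := by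
  classical
  have hmem : y ∈ univ.erase x := mem_erase.mpr ⟨hxy.symm, mem_univ y⟩
  have hcard : (((univ : Finset (Fin n)).erase x).erase y).card = n - 2 := by
    rw [card_erase_of_mem hmem, card_erase_of_mem (mem_univ x), card_univ, Fintype.card_fin]
    omega
  rw [← hcard, ← Finset.card_powerset]
  refine Finset.card_bij' (fun F _ => F.erase x) (fun G _ => insert x G) ?hi ?hj ?left ?right
  case hi =>
    intro F hF
    simp only [mem_filter, mem_univ, true_and] at hF
    simp only [mem_powerset]
    intro z hz
    rw [mem_erase] at hz
    exact mem_erase.mpr ⟨fun e => hF.2 (e ▸ hz.2), mem_erase.mpr ⟨hz.1, mem_univ z⟩⟩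
  case hj =>
    intro G hG
    simp only [mem_powerset] at hG
    have hyG : y ∉ G := fun hy => (mem_erase.mp (hG hy)).1 rfl
    simp only [mem_filter, mem_univ, true_and]
    exact ⟨mem_insert_self x G, by simp [mem_insert, hxy.symm, hyG]⟩
  case left =>
    intro F hF
    simp only [mem_filter, mem_univ, true_and] at hF
    exact insert_erase hF.1
  case right =>
    intro G hG
    simp only [mem_powerset] at hG
    exact erase_insert (fun hx => (mem_erase.mp (mem_erase.mp (hG hx)).2).1 rfl)

/-! ### Cross-Sperner bound via Harris–Kleitman -/

lemma amgm (a s : ℕ) (h : a ≤ s + s) : a * (s + s - a) ≤ s * s := by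
  rcases le_total a s with h' | h' <;> nlinarith [Nat.sub_add_cancel h]

lemma crossSperner {n : ℕ} (hn : 2 ≤ n) (X Z : Finset (Finset (Fin n)))
    (h : ∀ A ∈ X, ∀ C ∈ Z, ¬A ⊆ C ∧ ¬C ⊆ A) :
    X.card * Z.card ≤ 2 ^ (n - 2) * 2 ^ (n - 2) := by
  classical
  obtain ⟨m, rfl⟩ : ∃ m, n = m + 2 := ⟨n - 2, by omega⟩
  simp only [Nat.add_sub_cancel]
  set U : Finset (Finset (Fin (m + 2))) :=
    univ.filter (fun F => ∃ A ∈ X, A ⊆ F) with hUdef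
  set D : Finset (Finset (Fin (m + 2))) :=
    univ.filter (fun F => ∃ A ∈ X, F ⊆ A) with hDdef
  have hU : IsUpperSet (↑U : Set (Finset (Fin (m + 2)))) := by
    intro F G hFG hF
    simp only [hUdef, coe_filter, Set.mem_setOf_eq, mem_univ, true_and] at *
    obtain ⟨A, hA, hAF⟩ := hF
    exact ⟨A, hA, hAF.trans hFG⟩
  have hD : IsLowerSet (↑D : Set (Finset (Fin (m + 2)))) := by
    intro F G hGF hF
    simp only [hDdef, coe_filter, Set.mem_setOf_eq, mem_univ, true_and] at *
    obtain ⟨A, hA, hFA⟩ := hF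
    exact ⟨A, hA, hGF.trans hFA⟩
  have hXU : X ⊆ U ∩ D := by
    intro A hA
    simp only [hUdef, hDdef, mem_inter, mem_filter, mem_univ, true_and]
    exact ⟨⟨A, hA, subset_refl A⟩, ⟨A, hA, subset_refl A⟩⟩
  have hZ : Z ⊆ Uᶜ ∩ Dᶜ := by
    intro C hC
    rw [mem_inter, Finset.mem_compl, Finset.mem_compl]
    constructor
    · intro hCU
      rw [hUdef, mem_filter] at hCU
      obtain ⟨-, A, hA, hAC⟩ := hCU
      exact (h A hA C hC).1 hAC
    · intro hCD
      rw [hDdef, mem_filter] at hCD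
      obtain ⟨-, A, hA, hCA⟩ := hCD
      exact (h A hA C hC).2 hCA
  have hcardall : Fintype.card (Finset (Fin (m + 2))) = 2 ^ (m + 2) := by
    simp [Fintype.card_finset]
  have harris1 : 2 ^ (m + 2) * (U ∩ D).card ≤ U.card * D.card := by
    have := IsUpperSet.card_inter_le_finset hU hD
    rwa [Fintype.card_fin] at this
  have hUc : IsLowerSet (↑(Uᶜ) : Set (Finset (Fin (m + 2)))) := by
    rw [coe_compl]; exact hU.compl
  have hDc : IsUpperSet (↑(Dᶜ) : Set (Finset (Fin (m + 2)))) := by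
    rw [coe_compl]; exact hD.compl
  have harris2 : 2 ^ (m + 2) * (Dᶜ ∩ Uᶜ).card ≤ (Dᶜ).card * (Uᶜ).card := by
    have := IsUpperSet.card_inter_le_finset hDc hUc
    rwa [Fintype.card_fin] at this
  have hcU : (Uᶜ).card = 2 ^ (m + 1) + 2 ^ (m + 1) - U.card := by
    rw [card_compl, hcardall]; ring_nf
  have hcD : (Dᶜ).card = 2 ^ (m + 1) + 2 ^ (m + 1) - D.card := by
    rw [card_compl, hcardall]; ring_nf
  have hUle : U.card ≤ 2 ^ (m + 1) + 2 ^ (m + 1) := by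
    have := card_le_card (subset_univ U)
    rwa [card_univ, hcardall, show (2:ℕ) ^ (m+2) = 2^(m+1) + 2^(m+1) by ring] at this
  have hDle : D.card ≤ 2 ^ (m + 1) + 2 ^ (m + 1) := by
    have := card_le_card (subset_univ D)
    rwa [card_univ, hcardall, show (2:ℕ) ^ (m+2) = 2^(m+1) + 2^(m+1) by ring] at this
  have hx : X.card ≤ (U ∩ D).card := card_le_card hXU
  have hz : Z.card ≤ (Dᶜ ∩ Uᶜ).card := by
    rw [inter_comm]; exact card_le_card hZ
  have key : (2 ^ (m + 2) * 2 ^ (m + 2)) * (X.card * Z.card) ≤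
      (2 ^ (m + 2) * 2 ^ (m + 2)) * (2 ^ m * 2 ^ m) := by
    calc (2 ^ (m + 2) * 2 ^ (m + 2)) * (X.card * Z.card)
        = (2 ^ (m + 2) * X.card) * (2 ^ (m + 2) * Z.card) := by ring
      _ ≤ (2 ^ (m + 2) * (U ∩ D).card) * (2 ^ (m + 2) * (Dᶜ ∩ Uᶜ).card) :=
          Nat.mul_le_mul (Nat.mul_le_mul_left _ hx) (Nat.mul_le_mul_left _ hz)
      _ ≤ (U.card * D.card) * ((Dᶜ).card * (Uᶜ).card) := Nat.mul_le_mul harris1 harris2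
      _ = (U.card * (Uᶜ).card) * (D.card * (Dᶜ).card) := by ring
      _ ≤ (2 ^ (m + 1) * 2 ^ (m + 1)) * (2 ^ (m + 1) * 2 ^ (m + 1)) := by
          rw [hcU, hcD]
          exact Nat.mul_le_mul (amgm _ _ hUle) (amgm _ _ hDle)
      _ = (2 ^ (m + 2) * 2 ^ (m + 2)) * (2 ^ m * 2 ^ m) := by ring
  exact Nat.le_of_mul_le_mul_left key (by positivity)

/-! ### Structure of rainbow-avoiding colorings -/

lemma L1 {n : ℕ} {c : Finset (Fin n) → Option (Fin 3)} (h : AvoidsRainbow n c)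
    {A B C : Finset (Fin n)} {i j k : Fin 3}
    (hA : c A = some i) (hB : c B = some j) (hC : c C = some k)
    (hij : i ≠ j) (hik : i ≠ k) (hAB : A ≠ B) (hAC : A ≠ C)
    (cAB : A ⊆ B ∨ B ⊆ A) (cAC : A ⊆ C ∨ C ⊆ A) : j = k := by
  by_contra hjk
  obtain ⟨h1, h2, h3⟩ := h
  have hBC : B ≠ C := by
    rintro rfl
    rw [hB] at hC
    exact hjk (Option.some_inj.mp hC)
  rcases cAB with hab | hba
  · rcases cAC with hac | hca
    · by_cases hbc : B ⊆ C
      · exact h1 ⟨A, B, C, Finset.ssubset_iff_subset_ne.mpr ⟨hab, hAB⟩,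
          Finset.ssubset_iff_subset_ne.mpr ⟨hbc, hBC⟩, i, j, k, hA, hB, hC, hij, hik, hjk⟩
      · by_cases hcb : C ⊆ B
        · exact h1 ⟨A, C, B, Finset.ssubset_iff_subset_ne.mpr ⟨hac, hAC⟩,
            Finset.ssubset_iff_subset_ne.mpr ⟨hcb, hBC.symm⟩, i, k, j, hA, hC, hB, hik, hij,
            fun e => hjk e.symm⟩
        · exact h2 ⟨A, B, C, Finset.ssubset_iff_subset_ne.mpr ⟨hab, hAB⟩,
            Finset.ssubset_iff_subset_ne.mpr ⟨hac, hAC⟩, hbc, hcb, i, j, k, hA, hB, hC,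
            hij, hik, hjk⟩
    · exact h1 ⟨C, A, B, Finset.ssubset_iff_subset_ne.mpr ⟨hca, hAC.symm⟩,
        Finset.ssubset_iff_subset_ne.mpr ⟨hab, hAB⟩, k, i, j, hC, hA, hB, hik.symm,
        fun e => hjk e.symm, hij⟩
  · rcases cAC with hac | hca
    · exact h1 ⟨B, A, C, Finset.ssubset_iff_subset_ne.mpr ⟨hba, hAB.symm⟩,
        Finset.ssubset_iff_subset_ne.mpr ⟨hac, hAC⟩, j, i, k, hB, hA, hC, hij.symm, hjk, hik⟩
    · by_cases hbc : B ⊆ C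
      · exact h1 ⟨B, C, A, Finset.ssubset_iff_subset_ne.mpr ⟨hbc, hBC⟩,
          Finset.ssubset_iff_subset_ne.mpr ⟨hca, hAC.symm⟩, j, k, i, hB, hC, hA, hjk,
          hij.symm, hik.symm⟩
      · by_cases hcb : C ⊆ B
        · exact h1 ⟨C, B, A, Finset.ssubset_iff_subset_ne.mpr ⟨hcb, hBC.symm⟩,
            Finset.ssubset_iff_subset_ne.mpr ⟨hba, hAB.symm⟩, k, j, i, hC, hB, hA,
            fun e => hjk e.symm, hik.symm, hij.symm⟩
        · exact h3 ⟨A, B, C, Finset.ssubset_iff_subset_ne.mpr ⟨hba, hAB.symm⟩,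
            Finset.ssubset_iff_subset_ne.mpr ⟨hca, hAC.symm⟩, hbc, hcb, i, j, k, hA, hB, hC,
            hij, hik, hjk⟩

end Stmt7Aux

open Finset Stmt7Aux in
theorem stmt7 (n : ℕ) (hn : 3 ≤ n) :
    (∃ c : Finset (Fin n) → Option (Fin 3), AvoidsRainbow n c ∧
      ∀ i : Fin 3,
        (Finset.univ.filter fun F : Finset (Fin n) => c F = some i).card = 2 ^ (n - 2)) ∧
    (∀ c : Finset (Fin n) → Option (Fin 3), AvoidsRainbow n c →
      ∃ i : Fin 3,
        (Finset.univ.filter fun F : Finset (Fin n) => c F = some i).card ≤ 2 ^ (n - 2)) := by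
  classical
  constructor
  · -- construction
    set e0 : Fin n := ⟨0, by omega⟩ with he0
    set e1 : Fin n := ⟨1, by omega⟩ with he1
    set e2 : Fin n := ⟨2, by omega⟩ with he2
    have h01 : e0 ≠ e1 := by simp [he0, he1, Fin.ext_iff]
    have h12 : e1 ≠ e2 := by simp [he1, he2, Fin.ext_iff]
    have h02 : e0 ≠ e2 := by simp [he0, he2, Fin.ext_iff]
    refine ⟨myc n e0 e1 e2, ⟨?_, ?_, ?_⟩, ?_⟩
    · rintro ⟨A, B, C, hAB, hBC, i, j, k, hA, hB, hC, hij, hik, hjk⟩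
      simp only [myc] at hA hB hC
      rcases key1 _ _ _ (ble_of_subset e0 e1 e2 hAB.subset)
        (ble_of_subset e0 e1 e2 hBC.subset) i j k hA hB hC with h | h | h
      exacts [hij h, hik h, hjk h]
    · rintro ⟨A, B, C, hAB, hAC, -, -, i, j, k, hA, hB, hC, hij, hik, hjk⟩
      simp only [myc] at hA hB hC
      rcases key2 _ _ _ (ble_of_subset e0 e1 e2 hAB.subset)
        (ble_of_subset e0 e1 e2 hAC.subset) i j k hA hB hC with h | h | h
      exacts [hij h, hik h, hjk h]
    · rintro ⟨A, B, C, hBA, hCA, -, -, i, j, k, hA, hB, hC, hij, hik, hjk⟩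
      simp only [myc] at hA hB hC
      rcases key3 _ _ _ (ble_of_subset e0 e1 e2 hBA.subset)
        (ble_of_subset e0 e1 e2 hCA.subset) i j k hA hB hC with h | h | h
      exacts [hij h, hik h, hjk h]
    · intro i
      fin_cases i
      · show (univ.filter fun F : Finset (Fin n) => myc n e0 e1 e2 F = some 0).card = 2 ^ (n - 2)
        rw [show (univ.filter fun F : Finset (Fin n) => myc n e0 e1 e2 F = some 0) =
            univ.filter fun F : Finset (Fin n) => e0 ∈ F ∧ e2 ∉ F by
          ext F; simp [myc_eq0]]
        exact card_cond e0 e2 h02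
      · show (univ.filter fun F : Finset (Fin n) => myc n e0 e1 e2 F = some 1).card = 2 ^ (n - 2)
        rw [show (univ.filter fun F : Finset (Fin n) => myc n e0 e1 e2 F = some 1) =
            univ.filter fun F : Finset (Fin n) => e1 ∈ F ∧ e0 ∉ F by
          ext F; simp [myc_eq1]]
        exact card_cond e1 e0 h01.symm
      · show (univ.filter fun F : Finset (Fin n) => myc n e0 e1 e2 F = some 2).card = 2 ^ (n - 2)
        rw [show (univ.filter fun F : Finset (Fin n) => myc n e0 e1 e2 F = some 2) =
            univ.filter fun F : Finset (Fin n) => e2 ∈ F ∧ e1 ∉ F by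
          ext F; simp [myc_eq2]]
        exact card_cond e2 e1 h12.symm
  · -- upper bound
    intro c hAv
    by_contra hcon
    push_neg at hcon
    set m : ℕ := 2 ^ (n - 2) with hm
    have hm1 : 1 ≤ m := Nat.one_le_two_pow
    set K : Fin 3 → Finset (Finset (Fin n)) :=
      fun i => univ.filter fun F => c F = some i with hK
    have hKcard : ∀ i, m < (K i).card := fun i => hcon i
    set X : Fin 3 → Finset (Finset (Fin n)) :=
      fun l => univ.filter fun A =>
        (∃ i, c A = some i ∧ i ≠ l) ∧
        ¬∃ B, c B = some l ∧ A ≠ B ∧ (A ⊆ B ∨ B ⊆ A) with hX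
    -- each X l is cross-Sperner with K l
    have hcross : ∀ l, ∀ A ∈ X l, ∀ C ∈ K l, ¬A ⊆ C ∧ ¬C ⊆ A := by
      intro l A hA C hC
      rw [hX, mem_filter] at hA
      rw [hK, mem_filter] at hC
      obtain ⟨-, ⟨i, hci, hil⟩, hnl⟩ := hA
      have hAC : A ≠ C := by
        rintro rfl
        rw [hci] at hC
        exact hil (Option.some_inj.mp hC.2)
      constructor
      · exact fun hs => hnl ⟨C, hC.2, hAC, Or.inl hs⟩
      · exact fun hs => hnl ⟨C, hC.2, hAC, Or.inr hs⟩
    have hXlt : ∀ l, (X l).card < m := by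
      intro l
      by_contra hge
      push_neg at hge
      have h1 : m * (m + 1) ≤ (X l).card * (K l).card :=
        Nat.mul_le_mul hge (hKcard l)
      have h2 : (X l).card * (K l).card ≤ m * m := by
        have := crossSperner (by omega) (X l) (K l) (hcross l)
        rwa [← hm] at this
      nlinarith
    -- every colored set lies in some X l
    have hcover : K 0 ∪ K 1 ∪ K 2 ⊆ X 0 ∪ X 1 ∪ X 2 := by
      intro A hA
      have hcA : ∃ i, c A = some i := by
        simp only [mem_union, hK, mem_filter, mem_univ, true_and] at hA
        rcases hA with (h | h) | h
        exacts [⟨0, h⟩, ⟨1, h⟩, ⟨2, h⟩]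
      obtain ⟨i, hci⟩ := hcA
      have hothers : ∀ i : Fin 3, ∃ j k : Fin 3, j ≠ i ∧ k ≠ i ∧ j ≠ k := by decide
      obtain ⟨j, k, hji, hki, hjk⟩ := hothers i
      have hXmem : ∀ l : Fin 3, A ∈ X l → A ∈ X 0 ∪ X 1 ∪ X 2 := by
        intro l hl
        fin_cases l
        · exact mem_union_left _ (mem_union_left _ hl)
        · exact mem_union_left _ (mem_union_right _ hl)
        · exact mem_union_right _ hl
      by_cases hlj : ∃ B, c B = some j ∧ A ≠ B ∧ (A ⊆ B ∨ B ⊆ A)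
      · by_cases hlk : ∃ B, c B = some k ∧ A ≠ B ∧ (A ⊆ B ∨ B ⊆ A)
        · obtain ⟨B, hcB, hAB, hcompB⟩ := hlj
          obtain ⟨C, hcC, hAC, hcompC⟩ := hlk
          exact absurd (L1 hAv hci hcB hcC hji.symm hki.symm hAB hAC hcompB hcompC) hjk
        · refine hXmem k ?_
          rw [hX, mem_filter]
          exact ⟨mem_univ A, ⟨i, hci, hki.symm⟩, hlk⟩
      · refine hXmem j ?_
        rw [hX, mem_filter]
        exact ⟨mem_univ A, ⟨i, hci, hji.symm⟩, hlj⟩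
    -- disjointness of the color classes
    have hdisj : ∀ i j : Fin 3, i ≠ j → Disjoint (K i) (K j) := by
      intro i j hij
      rw [Finset.disjoint_left]
      intro A hAi hAj
      rw [hK, mem_filter] at hAi hAj
      rw [hAi.2] at hAj
      exact hij (Option.some_inj.mp hAj.2)
    have hKsum : (K 0 ∪ K 1 ∪ K 2).card = (K 0).card + (K 1).card + (K 2).card := by
      rw [card_union_of_disjoint, card_union_of_disjoint (hdisj 0 1 (by decide))]
      rw [Finset.disjoint_union_left]
      exact ⟨hdisj 0 2 (by decide), hdisj 1 2 (by decide)⟩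
    have hle1 : (K 0 ∪ K 1 ∪ K 2).card ≤ (X 0 ∪ X 1 ∪ X 2).card := card_le_card hcover
    have hle2 : (X 0 ∪ X 1 ∪ X 2).card ≤ (X 0).card + (X 1).card + (X 2).card :=
      (card_union_le _ _).trans (Nat.add_le_add_right (card_union_le _ _) _)
    have hK0 := hKcard 0
    have hK1 := hKcard 1
    have hK2 := hKcard 2
    have hX0 := hXlt 0
    have hX1 := hXlt 1
    have hX2 := hXlt 2
    omega
end

section
/- For n ≥ 3, there exists a 4-coloring of 2^[n] with no rainbow induced copy of the diamond D₂ in which every color class has size exactly 2^(n-2). -/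
/-!
The colouring only sees the trace `F ∩ [3]`, and taking traces is monotone, so a rainbow diamond
in `B_n` would give a rainbow, possibly degenerate, diamond of traces in `B_3`; a finite check
shows that there is none. Each colour is used by exactly two traces, and every trace is shared by
`2 ^ (n - 3)` sets.
-/

open Finset

/-- The colouring `c'` of `B_3`, with the ground set `{1, 2, 3}` and the colours `1, …, 4`
shifted down to `Fin 3` and `Fin 4`. -/
def diamondColoring (P : Finset (Fin 3)) : Fin 4 :=
  if P = {0} ∨ P = {0, 1} then 0
  else if P = {1} ∨ P = {1, 2} then 1
  else if P = {2} ∨ P = {0, 2} then 2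
  else 3

theorem diamondColoring_not_rainbow {A B C D : Finset (Fin 3)}
    (hAB : A ⊆ B) (hAC : A ⊆ C) (hBD : B ⊆ D) (hCD : C ⊆ D) :
    ¬(diamondColoring A ≠ diamondColoring B ∧ diamondColoring A ≠ diamondColoring C ∧
      diamondColoring A ≠ diamondColoring D ∧ diamondColoring B ≠ diamondColoring C ∧
      diamondColoring B ≠ diamondColoring D ∧ diamondColoring C ≠ diamondColoring D) := by
  have hcheck : ∀ A B C D : Finset (Fin 3), A ⊆ B → A ⊆ C → B ⊆ D → C ⊆ D →
      diamondColoring A = diamondColoring B ∨ diamondColoring A = diamondColoring C ∨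
        diamondColoring A = diamondColoring D ∨ diamondColoring B = diamondColoring C ∨
        diamondColoring B = diamondColoring D ∨ diamondColoring C = diamondColoring D := by
    decide
  have := hcheck A B C D hAB hAC hBD hCD
  tauto

theorem card_filter_diamondColoring_eq (i : Fin 4) :
    #{P | diamondColoring P = i} = 2 := by
  revert i
  decide

section Trace

variable {α β : Type*} [Fintype α] [DecidableEq α] [Fintype β] [DecidableEq β]

theorem card_filter_preimage_eq (e : β ↪ α) (P : Finset β) :
    #{F : Finset α | F.preimage e e.injective.injOn = P} =
      2 ^ (Fintype.card α - Fintype.card β) := by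
  set R := (univ : Finset β).map e
  have hunion : ∀ G ⊆ Rᶜ,
      (P.map e ∪ G).preimage e e.injective.injOn = P ∧ (P.map e ∪ G) \ R = G := by
    intro G hG
    have hGR := subset_compl_iff_disjoint_right.1 hG
    constructor
    · ext b
      have : e b ∉ G := fun h => disjoint_left.1 hGR h (by simp [R])
      simp only [mem_preimage, mem_union, mem_map' e, this, or_false]
    · rw [union_sdiff_distrib, sdiff_eq_empty_iff_subset.2 (map_subset_map.2 (subset_univ P)),
        empty_union, sdiff_eq_self_of_disjoint hGR]
  have hfiber : univ.filter (fun F : Finset α => F.preimage e e.injective.injOn = P) =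
      Rᶜ.powerset.image (P.map e ∪ ·) := by
    ext F
    simp only [mem_filter, mem_univ, true_and, mem_image, mem_powerset]
    constructor
    · rintro rfl
      refine ⟨F \ R, subset_compl_iff_disjoint_right.2 sdiff_disjoint, ?_⟩
      ext x
      simp only [R, mem_union, mem_sdiff, mem_map, mem_preimage, mem_univ, true_and]
      grind
    · rintro ⟨G, hG, rfl⟩
      exact (hunion G hG).1
  have hinj : Set.InjOn (P.map e ∪ ·) Rᶜ.powerset := fun G₁ hG₁ G₂ hG₂ h => by
    rw [← (hunion G₁ (mem_powerset.1 hG₁)).2, ← (hunion G₂ (mem_powerset.1 hG₂)).2]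
    exact congrArg (· \ R) h
  rw [hfiber, card_image_of_injOn hinj, card_powerset, card_compl, card_map, card_univ]

theorem card_filter_comp_preimage_eq {γ : Type*} [DecidableEq γ] (e : β ↪ α)
    (c : Finset β → γ) (i : γ) :
    #{F : Finset α | c (F.preimage e e.injective.injOn) = i} =
      #{P | c P = i} * 2 ^ (Fintype.card α - Fintype.card β) := by
  rw [card_eq_sum_card_fiberwise (f := fun F => F.preimage e e.injective.injOn)
    (t := {P | c P = i}) (fun F hF => by simpa using hF)]
  rw [← smul_eq_mul, ← sum_const]
  refine sum_congr rfl fun P hP => ?_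
  rw [filter_filter, ← card_filter_preimage_eq e P]
  congr 1
  ext F
  simp only [mem_filter, mem_univ, true_and] at hP ⊢
  exact ⟨And.right, fun h => ⟨h ▸ hP, h⟩⟩

end Trace

theorem stmt8 (n : ℕ) (hn : 3 ≤ n) :
    ∃ c : Finset (Fin n) → Fin 4,
      (¬∃ A B C D : Finset (Fin n), A ⊂ B ∧ A ⊂ C ∧ B ⊂ D ∧ C ⊂ D ∧ ¬B ⊆ C ∧ ¬C ⊆ B ∧
        c A ≠ c B ∧ c A ≠ c C ∧ c A ≠ c D ∧ c B ≠ c C ∧ c B ≠ c D ∧ c C ≠ c D) ∧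
      ∀ i : Fin 4,
        (Finset.univ.filter fun F : Finset (Fin n) => c F = i).card = 2 ^ (n - 2) := by
  set e := Fin.castLEEmb hn
  refine ⟨fun F => diamondColoring (F.preimage e e.injective.injOn), ?_, fun i => ?_⟩
  · rintro ⟨A, B, C, D, hAB, hAC, hBD, hCD, -, -, hrainbow⟩
    have htrace := monotone_preimage e.injective
    exact diamondColoring_not_rainbow (htrace hAB.subset) (htrace hAC.subset)
      (htrace hBD.subset) (htrace hCD.subset) hrainbow
  · rw [card_filter_comp_preimage_eq, card_filter_diamondColoring_eq, Fintype.card_fin,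
      Fintype.card_fin, ← pow_succ']
    congr 1
    omega
end

section
/- Let n = l·q (l divides n) and let ∅ = C₀ ⊊ C₁ ⊊ ... ⊊ C_l = [n] be a chain with |C_i \ C_{i−1}| = q for each i. Color each H with C_{i−1} ⊊ H ⊊ C_i by color i (leaving the C_j uncolored). Then this partial l-coloring of 2^[n] admits no rainbow incomparable pair (no rainbow A₂), and each color class has size exactly 2^q − 2. -/
theorem Monotone.le_of_mem_Ioo_of_lt {α : Type*} [Preorder α] {l : ℕ} {C : Fin (l + 1) → α}
    (hC : Monotone C) {i j : Fin l} (hij : i < j) {a b : α}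
    (ha : a ∈ Set.Ioo (C i.castSucc) (C i.succ)) (hb : b ∈ Set.Ioo (C j.castSucc) (C j.succ)) :
    a ≤ b :=
  ha.2.le.trans ((hC (Fin.succ_le_castSucc_iff.mpr hij)).trans hb.1.le)

theorem Finset.card_Ioo_eq_two_pow_card_sdiff_sub_two {α : Type*} [DecidableEq α]
    {s t : Finset α} (hst : s ⊆ t) : (Finset.Ioo s t).card = 2 ^ (t \ s).card - 2 := by
  rw [Finset.card_Ioo_finset hst, Finset.card_sdiff_of_subset hst]

theorem stmt15_general (n l q : ℕ) (C : Fin (l + 1) → Finset (Fin n))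
    (hmono : StrictMono C)
    (hsize : ∀ i : Fin l, (C i.succ \ C i.castSucc).card = q)
    (c : Finset (Fin n) → Option (Fin l))
    (hc : ∀ (H : Finset (Fin n)) (i : Fin l),
      c H = some i ↔ C i.castSucc ⊂ H ∧ H ⊂ C i.succ) :
    (¬∃ (F G : Finset (Fin n)) (i j : Fin l),
      c F = some i ∧ c G = some j ∧ i ≠ j ∧ ¬F ⊆ G ∧ ¬G ⊆ F) ∧
    ∀ i : Fin l,
      (Finset.univ.filter fun H : Finset (Fin n) => c H = some i).card = 2 ^ q - 2 := by
  have hclass : ∀ (H : Finset (Fin n)) (i : Fin l),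
      c H = some i ↔ H ∈ Set.Ioo (C i.castSucc) (C i.succ) := fun H i => hc H i
  constructor
  · rintro ⟨F, G, i, j, hF, hG, hij, hFG, hGF⟩
    rw [hclass] at hF hG
    rcases hij.lt_or_gt with h | h
    · exact hFG (hmono.monotone.le_of_mem_Ioo_of_lt h hF hG)
    · exact hGF (hmono.monotone.le_of_mem_Ioo_of_lt h hG hF)
  · intro i
    have hclass_eq : (Finset.univ.filter fun H => c H = some i) =
        Finset.Ioo (C i.castSucc) (C i.succ) := by
      ext H
      simp [hclass]
    rw [hclass_eq, Finset.card_Ioo_eq_two_pow_card_sdiff_sub_two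
      (hmono Fin.castSucc_lt_succ).le, hsize]

theorem stmt15 (n l q : ℕ) (hn : n = l * q) (C : Fin (l + 1) → Finset (Fin n))
    (hmono : StrictMono C) (h0 : C 0 = ∅) (hlast : C (Fin.last l) = Finset.univ)
    (hsize : ∀ i : Fin l, (C i.succ \ C i.castSucc).card = q)
    (c : Finset (Fin n) → Option (Fin l))
    (hc : ∀ (H : Finset (Fin n)) (i : Fin l),
      c H = some i ↔ C i.castSucc ⊂ H ∧ H ⊂ C i.succ) :
    (¬∃ (F G : Finset (Fin n)) (i j : Fin l),
      c F = some i ∧ c G = some j ∧ i ≠ j ∧ ¬F ⊆ G ∧ ¬G ⊆ F) ∧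
    ∀ i : Fin l,
      (Finset.univ.filter fun H : Finset (Fin n) => c H = some i).card = 2 ^ q - 2 :=
  stmt15_general n l q C hmono hsize c hc
end

section
/- Let c be a 3-coloring of 2^[n] with color classes F₁, F₂, F₃ that avoids rainbow copies of P₃, ∨₂, and ∧₂. For distinct i, j define F_i^j = {F ∈ F_i : ∃ G ∈ F_j, F and G are comparable}. Then for distinct i, j, k, the sets F_i^j and F_i^k are disjoint. -/
theorem stmt17 (n : ℕ) (c : Finset (Fin n) → Fin 3)
    (hP3 : ¬∃ A B C : Finset (Fin n), A ⊂ B ∧ B ⊂ C ∧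
      c A ≠ c B ∧ c A ≠ c C ∧ c B ≠ c C)
    (hVee : ¬∃ A B C : Finset (Fin n), A ⊂ B ∧ A ⊂ C ∧ ¬B ⊆ C ∧ ¬C ⊆ B ∧
      c A ≠ c B ∧ c A ≠ c C ∧ c B ≠ c C)
    (hWedge : ¬∃ A B C : Finset (Fin n), B ⊂ A ∧ C ⊂ A ∧ ¬B ⊆ C ∧ ¬C ⊆ B ∧
      c A ≠ c B ∧ c A ≠ c C ∧ c B ≠ c C) :
    ∀ i j k : Fin 3, i ≠ j → i ≠ k → j ≠ k →
      ∀ F : Finset (Fin n), c F = i →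
        ¬((∃ G : Finset (Fin n), c G = j ∧ (F ⊆ G ∨ G ⊆ F)) ∧
          (∃ G : Finset (Fin n), c G = k ∧ (F ⊆ G ∨ G ⊆ F))) := by
  intro i j k hij hik hjk F hF
  rintro ⟨⟨G1, hG1, hc1⟩, ⟨G2, hG2, hc2⟩⟩
  have cF1 : c F ≠ c G1 := by rw [hF, hG1]; exact hij
  have cF2 : c F ≠ c G2 := by rw [hF, hG2]; exact hik
  have c12 : c G1 ≠ c G2 := by rw [hG1, hG2]; exact hjk
  have h1 : F ≠ G1 := fun h => cF1 (by rw [h])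
  have h2 : F ≠ G2 := fun h => cF2 (by rw [h])
  have h12 : G1 ≠ G2 := fun h => c12 (by rw [h])
  rcases hc1 with h | h <;> rcases hc2 with h' | h'
  · -- F ⊂ G1, F ⊂ G2
    have s1 : F ⊂ G1 := ssubset_of_subset_of_ne h h1
    have s2 : F ⊂ G2 := ssubset_of_subset_of_ne h' h2
    by_cases hbc : G1 ⊆ G2
    · exact hP3 ⟨F, G1, G2, s1, ssubset_of_subset_of_ne hbc h12, cF1, cF2, c12⟩
    · by_cases hcb : G2 ⊆ G1
      · exact hP3 ⟨F, G2, G1, s2, ssubset_of_subset_of_ne hcb h12.symm, cF2, cF1, c12.symm⟩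
      · exact hVee ⟨F, G1, G2, s1, s2, hbc, hcb, cF1, cF2, c12⟩
  · -- F ⊂ G1, G2 ⊂ F
    exact hP3 ⟨G2, F, G1, ssubset_of_subset_of_ne h' h2.symm,
      ssubset_of_subset_of_ne h h1, cF2.symm, c12.symm, cF1⟩
  · -- G1 ⊂ F, F ⊂ G2
    exact hP3 ⟨G1, F, G2, ssubset_of_subset_of_ne h h1.symm,
      ssubset_of_subset_of_ne h' h2, cF1.symm, c12, cF2⟩
  · -- G1 ⊂ F, G2 ⊂ F
    have s1 : G1 ⊂ F := ssubset_of_subset_of_ne h h1.symm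
    have s2 : G2 ⊂ F := ssubset_of_subset_of_ne h' h2.symm
    by_cases hbc : G1 ⊆ G2
    · exact hP3 ⟨G1, G2, F, ssubset_of_subset_of_ne hbc h12, s2, c12, cF1.symm, cF2.symm⟩
    · by_cases hcb : G2 ⊆ G1
      · exact hP3 ⟨G2, G1, F, ssubset_of_subset_of_ne hcb h12.symm, s1, c12.symm, cF2.symm, cF1.symm⟩
      · exact hWedge ⟨F, G1, G2, s1, s2, hbc, hcb, cF1, cF2, c12⟩
end
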